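/- Let τ be a representation of the balanced pairs of a finitely aligned P-graph Λ, fix p ∈ P, a vertex v, a finite set H ⊆ vΛ∖{v}, and for μ,ν ∈ Λ^p v define θ_{μ,ν} := τ_{μ,ν} ∏_{λ∈H}(τ_{ν,ν} − τ_{νλ,νλ}). Then θ_{μ,ν}* = θ_{ν,μ} and θ_{μ,ν} θ_{ρ,σ} = δ_{ν,ρ} θ_{μ,σ} for all μ,ν,ρ,σ ∈ Λ^p v; i.e., the θ_{μ,ν} form a family of matrix units. -/

import Mathlib

universe u

/-- A quasi-lattice ordered group in the sense of Nica: a (discrete) group `G` together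
with a subsemigroup `P` containing the identity with `P ∩ P⁻¹ = {1}`, such that under the
partial order `p ≤ q ↔ p⁻¹ * q ∈ P`, any pair of elements of `G` with a common upper bound
in `P` has a least common upper bound in `P`. -/
structure QLOGroup (G : Type u) [Group G] where
  P : Set G
  one_mem : (1 : G) ∈ P
  mul_mem : ∀ {p q : G}, p ∈ P → q ∈ P → p * q ∈ P
  eq_one_of_mem_inv_mem : ∀ p : G, p ∈ P → p⁻¹ ∈ P → p = 1
  lub_exists : ∀ p q : G, (∃ r ∈ P, p⁻¹ * r ∈ P ∧ q⁻¹ * r ∈ P) →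
    ∃ r ∈ P, p⁻¹ * r ∈ P ∧ q⁻¹ * r ∈ P ∧
      ∀ s ∈ P, p⁻¹ * s ∈ P → q⁻¹ * s ∈ P → r⁻¹ * s ∈ P

namespace QLOGroup

variable {G : Type u} [Group G]

/-- The left-invariant partial order on `G` induced by `P`. -/
def le (Q : QLOGroup G) (p q : G) : Prop := p⁻¹ * q ∈ Q.P

/-- `s` is the least common upper bound in `P` of `p` and `q` (i.e. `s = p ∨ q < ∞`). -/
def IsLub (Q : QLOGroup G) (p q s : G) : Prop :=
  s ∈ Q.P ∧ Q.le p s ∧ Q.le q s ∧ ∀ t ∈ Q.P, Q.le p t → Q.le q t → Q.le s t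

/-- `s` is the least upper bound in `P` of the set `A` (i.e. `s = ∨A < ∞`). -/
def IsLubSet (Q : QLOGroup G) (A : Set G) (s : G) : Prop :=
  s ∈ Q.P ∧ (∀ a ∈ A, Q.le a s) ∧ ∀ t ∈ Q.P, (∀ a ∈ A, Q.le a t) → Q.le s t

/-- `p` and `q` have a common upper bound in `P` (i.e. `p ∨ q < ∞`). -/
def HasLub (Q : QLOGroup G) (p q : G) : Prop := ∃ s, Q.IsLub p q s

/-- A subset `F` is `∨`-closed if whenever `p, q ∈ F` have `p ∨ q < ∞`, then `p ∨ q ∈ F`. -/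
def VeeClosed (Q : QLOGroup G) (F : Set G) : Prop :=
  ∀ p ∈ F, ∀ q ∈ F, ∀ s, Q.IsLub p q s → s ∈ F

/-- `F̄ = {∨A : A ⊆ F, A ≠ ∅, ∨A ≠ ∞}`. -/
def veeClosure (Q : QLOGroup G) (F : Set G) : Set G :=
  {s | ∃ A ⊆ F, A.Nonempty ∧ Q.IsLubSet A s}

end QLOGroup

/-- A `P`-graph for a quasi-lattice ordered group `(G,P)`: a countable category with a
degree functor `d` into `P` satisfying the unique factorisation property.  Composition is
written in the path order of Raeburn-Sims: `comp μ ν` is defined when `s(μ) = r(ν)` (with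
`src = s = dom` and `tgt = r = cod`), and `comp` is a total function whose axioms are only
imposed on composable pairs. -/
structure PGraph {G : Type u} [Group G] (Q : QLOGroup G) where
  Obj : Type
  Mor : Type
  countable_mor : Countable Mor
  src : Mor → Obj
  tgt : Mor → Obj
  ident : Obj → Mor
  comp : Mor → Mor → Mor
  src_ident : ∀ v, src (ident v) = v
  tgt_ident : ∀ v, tgt (ident v) = v
  src_comp : ∀ μ ν, src μ = tgt ν → src (comp μ ν) = src ν
  tgt_comp : ∀ μ ν, src μ = tgt ν → tgt (comp μ ν) = tgt μ
  id_comp : ∀ μ, comp (ident (tgt μ)) μ = μ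
  comp_id : ∀ μ, comp μ (ident (src μ)) = μ
  comp_assoc : ∀ μ ν ρ, src μ = tgt ν → src ν = tgt ρ →
    comp (comp μ ν) ρ = comp μ (comp ν ρ)
  d : Mor → G
  d_mem : ∀ μ, d μ ∈ Q.P
  d_ident : ∀ v, d (ident v) = 1
  d_comp : ∀ μ ν, src μ = tgt ν → d (comp μ ν) = d μ * d ν
  factorisation : ∀ (lam : Mor) (p q : G), p ∈ Q.P → q ∈ Q.P → d lam = p * q →
    ∃! mn : Mor × Mor, src mn.1 = tgt mn.2 ∧ lam = comp mn.1 mn.2 ∧ d mn.1 = p ∧ d mn.2 = q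

namespace PGraph

variable {G : Type u} [Group G] {Q : QLOGroup G} (Λ : PGraph Q)

/-- The prefix order: `λ ⪯ μ` iff `μ = λμ'` for some `μ'`. -/
def PrefixLe (lam mu : Λ.Mor) : Prop :=
  ∃ tail, Λ.src lam = Λ.tgt tail ∧ mu = Λ.comp lam tail

/-- The set of minimal common extensions of `μ` and `ν`. -/
def MCE (mu nu : Λ.Mor) : Set Λ.Mor :=
  {lam | Λ.PrefixLe mu lam ∧ Λ.PrefixLe nu lam ∧ Q.IsLub (Λ.d mu) (Λ.d nu) (Λ.d lam)}

/-- `Λ` is finitely aligned if all the sets `MCE(μ,ν)` are finite. -/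
def FinitelyAligned : Prop := ∀ mu nu : Λ.Mor, (Λ.MCE mu nu).Finite

/-- A filter of `Λ`: a nonempty subset that is downward closed (F1) and upward
directed (F2) for the prefix order. -/
def IsGraphFilter (U : Set Λ.Mor) : Prop :=
  U.Nonempty ∧ (∀ mu ∈ U, ∀ lam, Λ.PrefixLe lam mu → lam ∈ U) ∧
    (∀ mu ∈ U, ∀ nu ∈ U, ∃ lam ∈ U, Λ.PrefixLe mu lam ∧ Λ.PrefixLe nu lam)

/-- An ultrafilter of `Λ`: a filter maximal under inclusion. -/
def IsGraphUltrafilter (U : Set Λ.Mor) : Prop :=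
  Λ.IsGraphFilter U ∧ ∀ V, Λ.IsGraphFilter V → U ⊆ V → U = V

/-- `λ·U = ⋃_{μ ∈ U} {α : α ⪯ λμ}`. -/
def actFwd (lam : Λ.Mor) (U : Set Λ.Mor) : Set Λ.Mor :=
  {a | ∃ mu ∈ U, Λ.PrefixLe a (Λ.comp lam mu)}

/-- `λ*·V = {μ : λμ ∈ V}`. -/
def actBwd (lam : Λ.Mor) (V : Set Λ.Mor) : Set Λ.Mor :=
  {mu | Λ.src lam = Λ.tgt mu ∧ Λ.comp lam mu ∈ V}

/-- `(μ,ν)` is a balanced pair: `s(μ) = s(ν)` and `d(μ) = d(ν)`. -/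
def Balanced (mu nu : Λ.Mor) : Prop := Λ.src mu = Λ.src nu ∧ Λ.d mu = Λ.d nu

/-- The pairs `(α,β)` with `να = ξβ ∈ MCE(ν,ξ)`. -/
def MCEpairs (nu xi : Λ.Mor) : Set (Λ.Mor × Λ.Mor) :=
  {p | Λ.src nu = Λ.tgt p.1 ∧ Λ.src xi = Λ.tgt p.2 ∧
    Λ.comp nu p.1 = Λ.comp xi p.2 ∧ Λ.comp nu p.1 ∈ Λ.MCE nu xi}

end PGraph

/-- A representation of the balanced pairs `Λ *_{d,s} Λ` of `Λ` in a C*-algebra `A`: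
(B1) `τ_{μ,ν}* = τ_{ν,μ}` and
(B2) `τ_{μ,ν} τ_{ξ,η} = ∑_{να = ξβ ∈ MCE(ν,ξ)} τ_{μα,ηβ}`. -/
def PGraph.IsBalRep {G : Type u} [Group G] {Q : QLOGroup G} (Λ : PGraph Q)
    {A : Type*} [NormedRing A] [StarRing A] [CStarRing A]
    (τ : Λ.Mor → Λ.Mor → A) : Prop :=
  (∀ mu nu : Λ.Mor, Λ.Balanced mu nu → star (τ mu nu) = τ nu mu) ∧
  (∀ mu nu xi eta : Λ.Mor, Λ.Balanced mu nu → Λ.Balanced xi eta →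
    τ mu nu * τ xi eta =
      ∑ᶠ p ∈ Λ.MCEpairs nu xi, τ (Λ.comp mu p.1) (Λ.comp eta p.2))

/-- The elements `θ_{μ,ν} = τ_{μ,ν} ∏_{λ ∈ H} (τ_{ν,ν} − τ_{νλ,νλ})`, where the finite set
`H` is recorded as a duplicate-free list (the product is order-independent since the
factors commute). -/
noncomputable def PGraph.theta {G : Type u} [Group G] {Q : QLOGroup G} (Λ : PGraph Q)
    {A : Type*} [NormedRing A] [StarRing A] [CStarRing A]
    (τ : Λ.Mor → Λ.Mor → A) (H : List Λ.Mor) (mu nu : Λ.Mor) : A :=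
  τ mu nu * ((H.map fun lam => τ nu nu - τ (Λ.comp nu lam) (Λ.comp nu lam)).prod)

/-! Each factor `τ_{ν,ν} − τ_{νλ,νλ}` is a difference of comparable projections, and the diagonal
projections `τ_{x,x}` commute, so `P_ν := ∏_{λ∈H}(τ_{ν,ν} − τ_{νλ,νλ})` is a projection. The
relation (B2) collapses to `τ_{μ,ν} τ_{ν,σ} = τ_{μ,σ}` (since `MCE(ν,ν) = {ν}`) and to
`τ_{μ,ν} τ_{ρ,σ} = 0` for `ν ≠ ρ` of equal degree (unique factorisation makes `MCE(ν,ρ)` empty),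
and gives the intertwining `P_μ τ_{μ,ν} = τ_{μ,ν} P_ν`. Hence
`θ_{μ,ν} θ_{ρ,σ} = P_μ (τ_{μ,ν} τ_{ρ,σ}) P_σ`, which is `δ_{ν,ρ} θ_{μ,σ}`. -/

theorem SemiconjBy.list_prod_map {M ι : Type*} [Monoid M] {a : M} {f g : ι → M}
    {L : List ι} (h : ∀ i ∈ L, SemiconjBy a (f i) (g i)) :
    SemiconjBy a (L.map f).prod (L.map g).prod := by
  induction L with
  | nil => exact SemiconjBy.one_right a
  | cons i L ih =>
    simp only [List.map_cons, List.prod_cons]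
    exact (h i List.mem_cons_self).mul_right (ih fun j hj => h j (List.mem_cons_of_mem i hj))

theorem IsStarProjection.list_prod {R : Type*} [Semiring R] [StarRing R] {L : List R}
    (hL : ∀ p ∈ L, IsStarProjection p) (hc : ∀ p ∈ L, ∀ q ∈ L, Commute p q) :
    IsStarProjection L.prod := by
  induction L with
  | nil => exact IsStarProjection.one R
  | cons p L ih =>
    rw [List.prod_cons]
    exact (hL p List.mem_cons_self).mul
      (ih (fun q hq => hL q (List.mem_cons_of_mem p hq))
        fun q hq r hr => hc q (List.mem_cons_of_mem p hq) r (List.mem_cons_of_mem p hr))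
      (Commute.list_prod_right L p fun q hq => hc p List.mem_cons_self q (List.mem_cons_of_mem p hq))

namespace QLOGroup

variable {G : Type u} [Group G] (Q : QLOGroup G)

theorem le_refl (g : G) : Q.le g g := by
  rw [le, inv_mul_cancel]
  exact Q.one_mem

variable {Q} in
theorem le_antisymm {g h : G} (hgh : Q.le g h) (hhg : Q.le h g) : g = h :=
  inv_mul_eq_one.mp <|
    Q.eq_one_of_mem_inv_mem _ hgh (by rwa [mul_inv_rev, inv_inv])

end QLOGroup

namespace PGraph

variable {G : Type u} [Group G] {Q : QLOGroup G} (Λ : PGraph Q)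

theorem comp_inj {x y a b : Λ.Mor} (ha : Λ.src x = Λ.tgt a) (hb : Λ.src y = Λ.tgt b)
    (h : Λ.comp x a = Λ.comp y b) (hd : Λ.d x = Λ.d y) : x = y ∧ a = b := by
  have hda : Λ.d a = Λ.d b :=
    mul_left_cancel (a := Λ.d x) (by rw [← Λ.d_comp x a ha, h, Λ.d_comp y b hb, hd])
  obtain ⟨_, _, huniq⟩ := Λ.factorisation (Λ.comp x a) (Λ.d x) (Λ.d a)
    (Λ.d_mem x) (Λ.d_mem a) (Λ.d_comp x a ha)
  exact Prod.mk.inj <|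
    (huniq (x, a) ⟨ha, rfl, rfl, rfl⟩).trans (huniq (y, b) ⟨hb, h, hd.symm, hda.symm⟩).symm

theorem comp_left_cancel {x a b : Λ.Mor} (ha : Λ.src x = Λ.tgt a) (hb : Λ.src x = Λ.tgt b)
    (h : Λ.comp x a = Λ.comp x b) : a = b :=
  (Λ.comp_inj ha hb h rfl).2

theorem prefixLe_refl (x : Λ.Mor) : Λ.PrefixLe x x :=
  ⟨Λ.ident (Λ.src x), (Λ.tgt_ident _).symm, (Λ.comp_id x).symm⟩

theorem eq_of_prefixLe_of_d_eq {x y g : Λ.Mor} (hx : Λ.PrefixLe x g) (hy : Λ.PrefixLe y g)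
    (hd : Λ.d x = Λ.d y) : x = y := by
  obtain ⟨a, ha, rfl⟩ := hx
  obtain ⟨b, hb, hab⟩ := hy
  exact (Λ.comp_inj ha hb hab hd).1

theorem d_le_d_comp {x lam : Λ.Mor} (h : Λ.src x = Λ.tgt lam) :
    Q.le (Λ.d x) (Λ.d (Λ.comp x lam)) := by
  rw [QLOGroup.le, Λ.d_comp x lam h, inv_mul_cancel_left]
  exact Λ.d_mem lam

theorem mce_self_comp {x lam : Λ.Mor} (h : Λ.src x = Λ.tgt lam) :
    Λ.MCE x (Λ.comp x lam) = {Λ.comp x lam} := by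
  ext g
  constructor
  · rintro ⟨-, hxg, -, -, -, hleast⟩
    obtain ⟨t, ht, rfl⟩ := hxg
    have hd : Λ.d (Λ.comp (Λ.comp x lam) t) = Λ.d (Λ.comp x lam) :=
      QLOGroup.le_antisymm (hleast _ (Λ.d_mem _) (Λ.d_le_d_comp h) (Q.le_refl _))
        (Λ.d_le_d_comp ht)
    exact Λ.eq_of_prefixLe_of_d_eq (Λ.prefixLe_refl _) ⟨t, ht, rfl⟩ hd
  · rintro rfl
    exact ⟨⟨lam, h, rfl⟩, Λ.prefixLe_refl _, Λ.d_mem _, Λ.d_le_d_comp h, Q.le_refl _,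
      fun _ _ _ hle => hle⟩

theorem mcePairs_self_comp {x lam : Λ.Mor} (h : Λ.src x = Λ.tgt lam) :
    Λ.MCEpairs x (Λ.comp x lam) = {(lam, Λ.ident (Λ.src lam))} := by
  have hsrc := Λ.src_comp x lam h
  ext ⟨α, β⟩
  simp only [MCEpairs, Λ.mce_self_comp h, Set.mem_ofPred_eq, Set.mem_singleton_iff,
    Prod.mk.injEq]
  constructor
  · rintro ⟨hα, hβ, hαβ, hxα⟩
    refine ⟨Λ.comp_left_cancel hα h hxα, ?_⟩
    rw [← hsrc]
    exact Λ.comp_left_cancel hβ (Λ.tgt_ident _).symm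
      ((hαβ.symm.trans hxα).trans (Λ.comp_id _).symm)
  · rintro ⟨rfl, rfl⟩
    exact ⟨h, by rw [Λ.tgt_ident, hsrc], by rw [← hsrc, Λ.comp_id], rfl⟩

theorem mcePairs_self (x : Λ.Mor) :
    Λ.MCEpairs x x = {(Λ.ident (Λ.src x), Λ.ident (Λ.src x))} := by
  have h := Λ.mcePairs_self_comp (Λ.tgt_ident (Λ.src x)).symm
  rwa [Λ.comp_id, Λ.src_ident] at h

theorem mcePairs_eq_empty_of_ne {x y : Λ.Mor} (hd : Λ.d x = Λ.d y) (hne : x ≠ y) :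
    Λ.MCEpairs x y = ∅ :=
  Set.eq_empty_of_forall_notMem fun _ ⟨_, _, _, hx, hy, _⟩ =>
    hne (Λ.eq_of_prefixLe_of_d_eq hx hy hd)

theorem swap_mem_mcePairs {x y : Λ.Mor} {q : Λ.Mor × Λ.Mor} (hq : q ∈ Λ.MCEpairs x y) :
    q.swap ∈ Λ.MCEpairs y x := by
  obtain ⟨hx, hy, hxy, hpx, hpy, hmem, hlx, hly, hleast⟩ := hq
  refine ⟨hy, hx, hxy.symm, ?_⟩
  rw [Prod.fst_swap, ← hxy]
  exact ⟨hpy, hpx, hmem, hly, hlx, fun t ht hyt hxt => hleast t ht hxt hyt⟩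

variable {Λ}

theorem Balanced.symm {x y : Λ.Mor} (h : Λ.Balanced x y) : Λ.Balanced y x :=
  ⟨h.1.symm, h.2.symm⟩

theorem Balanced.comp {x y lam : Λ.Mor} (h : Λ.Balanced x y) (hx : Λ.src x = Λ.tgt lam) :
    Λ.Balanced (Λ.comp x lam) (Λ.comp y lam) := by
  have hy : Λ.src y = Λ.tgt lam := h.1.symm.trans hx
  exact ⟨by rw [Λ.src_comp x lam hx, Λ.src_comp y lam hy],
    by rw [Λ.d_comp x lam hx, Λ.d_comp y lam hy, h.2]⟩

variable (Λ) in
noncomputable def gapProj {A : Type*} [Ring A] (τ : Λ.Mor → Λ.Mor → A) (H : List Λ.Mor)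
    (x : Λ.Mor) : A :=
  (H.map fun lam => τ x x - τ (Λ.comp x lam) (Λ.comp x lam)).prod

namespace IsBalRep

variable {A : Type*} [NormedRing A] [StarRing A] [CStarRing A] {τ : Λ.Mor → Λ.Mor → A}

theorem star_eq (hτ : Λ.IsBalRep τ) {x y : Λ.Mor} (h : Λ.Balanced x y) :
    star (τ x y) = τ y x :=
  hτ.1 x y h

theorem mul_same (hτ : Λ.IsBalRep τ) {a x b : Λ.Mor} (hax : Λ.Balanced a x)
    (hxb : Λ.Balanced x b) : τ a x * τ x b = τ a b := by
  rw [hτ.2 a x x b hax hxb, Λ.mcePairs_self, finsum_mem_singleton]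
  have ha : Λ.comp a (Λ.ident (Λ.src x)) = a := by rw [← hax.1, Λ.comp_id]
  have hb : Λ.comp b (Λ.ident (Λ.src x)) = b := by rw [hxb.1, Λ.comp_id]
  rw [ha, hb]

theorem mul_of_ne (hτ : Λ.IsBalRep τ) {a x y b : Λ.Mor} (hax : Λ.Balanced a x)
    (hyb : Λ.Balanced y b) (hd : Λ.d x = Λ.d y) (hne : x ≠ y) : τ a x * τ y b = 0 := by
  rw [hτ.2 a x y b hax hyb, Λ.mcePairs_eq_empty_of_ne hd hne, finsum_mem_empty]

theorem mul_comp_self (hτ : Λ.IsBalRep τ) {a x lam : Λ.Mor} (hax : Λ.Balanced a x)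
    (h : Λ.src x = Λ.tgt lam) :
    τ a x * τ (Λ.comp x lam) (Λ.comp x lam) = τ (Λ.comp a lam) (Λ.comp x lam) := by
  rw [hτ.2 a x _ _ hax ⟨rfl, rfl⟩, Λ.mcePairs_self_comp h, finsum_mem_singleton,
    ← Λ.src_comp x lam h, Λ.comp_id]

theorem comp_self_mul (hτ : Λ.IsBalRep τ) {x b lam : Λ.Mor} (hxb : Λ.Balanced x b)
    (h : Λ.src x = Λ.tgt lam) :
    τ (Λ.comp x lam) (Λ.comp x lam) * τ x b = τ (Λ.comp x lam) (Λ.comp b lam) := by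
  have hb : Λ.src b = Λ.tgt lam := hxb.1.symm.trans h
  calc τ (Λ.comp x lam) (Λ.comp x lam) * τ x b
      = star (τ b x * τ (Λ.comp x lam) (Λ.comp x lam)) := by
        rw [star_mul, hτ.star_eq ⟨rfl, rfl⟩, hτ.star_eq hxb.symm]
    _ = τ (Λ.comp x lam) (Λ.comp b lam) := by
        rw [hτ.mul_comp_self hxb.symm h, hτ.star_eq (hxb.symm.comp hb)]

theorem isStarProjection_diag (hτ : Λ.IsBalRep τ) (x : Λ.Mor) : IsStarProjection (τ x x) where
  isIdempotentElem := hτ.mul_same ⟨rfl, rfl⟩ ⟨rfl, rfl⟩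
  isSelfAdjoint := hτ.star_eq ⟨rfl, rfl⟩

theorem commute_diag (hτ : Λ.IsBalRep τ) (x y : Λ.Mor) : Commute (τ x x) (τ y y) := by
  change τ x x * τ y y = τ y y * τ x x
  rw [hτ.2 x x y y ⟨rfl, rfl⟩ ⟨rfl, rfl⟩, hτ.2 y y x x ⟨rfl, rfl⟩ ⟨rfl, rfl⟩]
  refine finsum_mem_eq_of_bijOn Prod.swap ⟨fun q hq => Λ.swap_mem_mcePairs hq,
    Prod.swap_injective.injOn, fun q hq => ⟨q.swap, Λ.swap_mem_mcePairs hq, q.swap_swap⟩⟩ ?_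
  rintro q ⟨-, -, hq, -⟩
  exact congrArg₂ τ hq hq.symm

theorem isStarProjection_gapProj (hτ : Λ.IsBalRep τ) {H : List Λ.Mor} {x : Λ.Mor}
    (hH : ∀ lam ∈ H, Λ.src x = Λ.tgt lam) : IsStarProjection (Λ.gapProj τ H x) := by
  have hcomm (y z : Λ.Mor) : Commute (τ x x - τ y y) (τ x x - τ z z) :=
    ((hτ.commute_diag _ _).sub_left (hτ.commute_diag _ _)).sub_right
      ((hτ.commute_diag _ _).sub_left (hτ.commute_diag _ _))
  refine IsStarProjection.list_prod (List.forall_mem_map.2 fun lam hlam => ?_)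
    (List.forall_mem_map.2 fun _ _ => List.forall_mem_map.2 fun _ _ => hcomm _ _)
  exact (hτ.isStarProjection_diag _).sub_of_mul_eq_right (hτ.isStarProjection_diag x)
    (hτ.mul_comp_self ⟨rfl, rfl⟩ (hH lam hlam))

theorem gapProj_mul (hτ : Λ.IsBalRep τ) {H : List Λ.Mor} {x y : Λ.Mor} (hxy : Λ.Balanced x y)
    (hH : ∀ lam ∈ H, Λ.src x = Λ.tgt lam) :
    Λ.gapProj τ H x * τ x y = τ x y * Λ.gapProj τ H y := by
  refine (SemiconjBy.list_prod_map fun lam hlam => ?_).symm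
  change τ x y * (τ y y - _) = (τ x x - _) * τ x y
  rw [mul_sub, sub_mul, hτ.mul_same hxy ⟨rfl, rfl⟩, hτ.mul_same ⟨rfl, rfl⟩ hxy,
    hτ.mul_comp_self hxy (hxy.1.symm.trans (hH lam hlam)), hτ.comp_self_mul hxy (hH lam hlam)]

theorem theta_eq_mul_gapProj {H : List Λ.Mor} (mu nu : Λ.Mor) :
    Λ.theta τ H mu nu = τ mu nu * Λ.gapProj τ H nu :=
  rfl

theorem star_theta (hτ : Λ.IsBalRep τ) {H : List Λ.Mor} {mu nu : Λ.Mor}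
    (hmn : Λ.Balanced mu nu) (hH : ∀ lam ∈ H, Λ.src nu = Λ.tgt lam) :
    star (Λ.theta τ H mu nu) = Λ.theta τ H nu mu := by
  rw [theta_eq_mul_gapProj, theta_eq_mul_gapProj, star_mul,
    (hτ.isStarProjection_gapProj hH).isSelfAdjoint.star_eq, hτ.star_eq hmn,
    hτ.gapProj_mul hmn.symm hH]

theorem theta_mul_theta_same (hτ : Λ.IsBalRep τ) {H : List Λ.Mor} {mu nu sig : Λ.Mor}
    (hmn : Λ.Balanced mu nu) (hns : Λ.Balanced nu sig)
    (hH : ∀ lam ∈ H, Λ.src nu = Λ.tgt lam) :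
    Λ.theta τ H mu nu * Λ.theta τ H nu sig = Λ.theta τ H mu sig := by
  have hHs : ∀ lam ∈ H, Λ.src sig = Λ.tgt lam := fun lam hlam => hns.1.symm.trans (hH lam hlam)
  simp only [theta_eq_mul_gapProj]
  calc τ mu nu * Λ.gapProj τ H nu * (τ nu sig * Λ.gapProj τ H sig)
      = τ mu nu * (Λ.gapProj τ H nu * τ nu sig) * Λ.gapProj τ H sig := by
        simp only [mul_assoc]
    _ = τ mu nu * τ nu sig * (Λ.gapProj τ H sig * Λ.gapProj τ H sig) := by
        rw [hτ.gapProj_mul hns hH]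
        simp only [mul_assoc]
    _ = τ mu sig * Λ.gapProj τ H sig := by
        rw [hτ.mul_same hmn hns, (hτ.isStarProjection_gapProj hHs).isIdempotentElem.eq]

theorem theta_mul_theta_of_ne (hτ : Λ.IsBalRep τ) {H : List Λ.Mor} {mu nu rho sig : Λ.Mor}
    (hmn : Λ.Balanced mu nu) (hrs : Λ.Balanced rho sig) (hd : Λ.d nu = Λ.d rho)
    (hne : nu ≠ rho) (hH : ∀ lam ∈ H, Λ.src mu = Λ.tgt lam) :
    Λ.theta τ H mu nu * Λ.theta τ H rho sig = 0 := by
  simp only [theta_eq_mul_gapProj]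
  calc τ mu nu * Λ.gapProj τ H nu * (τ rho sig * Λ.gapProj τ H sig)
      = Λ.gapProj τ H mu * (τ mu nu * τ rho sig) * Λ.gapProj τ H sig := by
        rw [← hτ.gapProj_mul hmn hH]
        simp only [mul_assoc]
    _ = 0 := by rw [hτ.mul_of_ne hmn hrs hd hne, mul_zero, zero_mul]

end IsBalRep

end PGraph

theorem stmt13_general {G : Type u} [Group G] {Q : QLOGroup G} (Λ : PGraph Q)
    {A : Type*} [NormedRing A] [StarRing A] [CStarRing A]
    (τ : Λ.Mor → Λ.Mor → A) (hτ : Λ.IsBalRep τ)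
    (p : G) (v : Λ.Obj) (H : List Λ.Mor)
    (hH : ∀ lam ∈ H, Λ.tgt lam = v ∧ lam ≠ Λ.ident v) :
    ∀ mu nu rho sig : Λ.Mor,
      Λ.d mu = p → Λ.d nu = p → Λ.d rho = p → Λ.d sig = p →
      Λ.src mu = v → Λ.src nu = v → Λ.src rho = v → Λ.src sig = v →
      star (Λ.theta τ H mu nu) = Λ.theta τ H nu mu ∧
      (nu = rho → Λ.theta τ H mu nu * Λ.theta τ H rho sig = Λ.theta τ H mu sig) ∧
      (nu ≠ rho → Λ.theta τ H mu nu * Λ.theta τ H rho sig = 0) := by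
  intro mu nu rho sig hdmu hdnu hdrho hdsig hsmu hsnu hsrho hssig
  have bal {x y : Λ.Mor} (hdx : Λ.d x = p) (hdy : Λ.d y = p) (hsx : Λ.src x = v)
      (hsy : Λ.src y = v) : Λ.Balanced x y :=
    ⟨hsx.trans hsy.symm, hdx.trans hdy.symm⟩
  have composable {x : Λ.Mor} (hsx : Λ.src x = v) : ∀ lam ∈ H, Λ.src x = Λ.tgt lam :=
    fun lam hlam => hsx.trans (hH lam hlam).1.symm
  refine ⟨hτ.star_theta (bal hdmu hdnu hsmu hsnu) (composable hsnu), ?_, fun hne =>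
    hτ.theta_mul_theta_of_ne (bal hdmu hdnu hsmu hsnu) (bal hdrho hdsig hsrho hssig)
      (hdnu.trans hdrho.symm) hne (composable hsmu)⟩
  rintro rfl
  exact hτ.theta_mul_theta_same (bal hdmu hdnu hsmu hsnu) (bal hdnu hdsig hsnu hssig)
    (composable hsnu)

/-- With `θ_{μ,ν} := τ_{μ,ν} ∏_{λ∈H}(τ_{ν,ν} − τ_{νλ,νλ})` for a finite
`H ⊆ vΛ∖{v}`, the elements `{θ_{μ,ν} : μ,ν ∈ Λ^p v}` form a family of matrix units:
`θ_{μ,ν}* = θ_{ν,μ}` and `θ_{μ,ν} θ_{ρ,σ} = δ_{ν,ρ} θ_{μ,σ}`. -/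
theorem stmt13 {G : Type u} [Group G] {Q : QLOGroup G} (Λ : PGraph Q)
    (hFA : Λ.FinitelyAligned)
    {A : Type*} [NormedRing A] [StarRing A] [CStarRing A] [CompleteSpace A]
    [NormedAlgebra ℂ A] [StarModule ℂ A]
    (τ : Λ.Mor → Λ.Mor → A) (hτ : Λ.IsBalRep τ)
    (p : G) (v : Λ.Obj) (H : List Λ.Mor) (hnd : H.Nodup)
    (hH : ∀ lam ∈ H, Λ.tgt lam = v ∧ lam ≠ Λ.ident v) :
    ∀ mu nu rho sig : Λ.Mor,
      Λ.d mu = p → Λ.d nu = p → Λ.d rho = p → Λ.d sig = p →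
      Λ.src mu = v → Λ.src nu = v → Λ.src rho = v → Λ.src sig = v →
      star (Λ.theta τ H mu nu) = Λ.theta τ H nu mu ∧
      (nu = rho → Λ.theta τ H mu nu * Λ.theta τ H rho sig = Λ.theta τ H mu sig) ∧
      (nu ≠ rho → Λ.theta τ H mu nu * Λ.theta τ H rho sig = 0) :=
  stmt13_general Λ τ hτ p v H hH
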